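/- Let p be a prime, n ≥ 1 an integer, and τ ∈ GL₂(ℤ_p) with w_p(τ) > 0 (equivalently 2·c_p(τ) < n, computing c_p, w_p with n_p = n). Then there exists x ∈ ℚ_p such that for all y₁, y₂ ∈ ℤ_p^× and all γ ∈ K₀(p^n), the matrix σ = γ · (0 −1; p^n 0) · τ · (1 x; 0 1) · diag(y₁·p^{−c_p(τ)}, y₂·p^{c_p(τ)−n}) belongs to GL₂(ℤ_p) and satisfies c_p(σ) = n − c_p(τ). -/

import Mathlib

open Matrix

/-- For `τ ∈ GL₂(ℤ_p)` with lower-left entry `c`, `cP p n τ = min(v_p(c), n)`,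
realized as the largest `k ≤ n` with `p^k ∣ c`. -/
noncomputable def cP (p : ℕ) [Fact p.Prime] (n : ℕ)
    (τ : GL (Fin 2) ℤ_[p]) : ℕ :=
  sSup {k | k ≤ n ∧ (p : ℤ_[p]) ^ k ∣ (τ : Matrix (Fin 2) (Fin 2) ℤ_[p]) 1 0}

/-- `wP p n τ = max(n − 2 cP p n τ, 0)` (truncated subtraction). -/
noncomputable def wP (p : ℕ) [Fact p.Prime] (n : ℕ)
    (τ : GL (Fin 2) ℤ_[p]) : ℕ :=
  n - 2 * cP p n τ

section Helpers

variable {p : ℕ} [Fact p.Prime]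

lemma isUnit_iff_not_dvd (z : ℤ_[p]) : IsUnit z ↔ ¬ (p:ℤ_[p]) ∣ z := by
  rw [← PadicInt.norm_lt_one_iff_dvd, ← PadicInt.not_isUnit_iff, not_not]

lemma sSup_eq_of (n m : ℕ) (z : ℤ_[p]) (hm : m ≤ n) (hdvd : (p:ℤ_[p])^m ∣ z)
    (hnd : m = n ∨ ¬ (p:ℤ_[p])^(m+1) ∣ z) :
    sSup {k | k ≤ n ∧ (p : ℤ_[p]) ^ k ∣ z} = m := by
  have hbdd : BddAbove {k | k ≤ n ∧ (p : ℤ_[p]) ^ k ∣ z} := ⟨n, fun k hk => hk.1⟩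
  have hmem : m ∈ {k | k ≤ n ∧ (p : ℤ_[p]) ^ k ∣ z} := ⟨hm, hdvd⟩
  refine le_antisymm (csSup_le ⟨m, hmem⟩ ?_) (le_csSup hbdd hmem)
  rintro k ⟨hk1, hk2⟩
  by_contra hk
  push_neg at hk
  rcases hnd with rfl | hnd
  · omega
  · exact hnd (dvd_trans (pow_dvd_pow _ (by omega)) hk2)


end Helpers

theorem stmt_3 (p : ℕ) [Fact p.Prime] (n : ℕ) (hn : 1 ≤ n)
    (τ : GL (Fin 2) ℤ_[p]) (hw : 0 < wP p n τ) :
    ∃ x : ℚ_[p], ∀ (y₁ y₂ : ℤ_[p]ˣ) (γ : GL (Fin 2) ℤ_[p]),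
      (p : ℤ_[p]) ^ n ∣ (γ : Matrix (Fin 2) (Fin 2) ℤ_[p]) 1 0 →
      ∃ σ : GL (Fin 2) ℤ_[p],
        ((σ : Matrix (Fin 2) (Fin 2) ℤ_[p]).map ((↑) : ℤ_[p] → ℚ_[p])) =
          (γ : Matrix (Fin 2) (Fin 2) ℤ_[p]).map ((↑) : ℤ_[p] → ℚ_[p]) *
            !![0, -1; (p : ℚ_[p]) ^ n, 0] *
            (τ : Matrix (Fin 2) (Fin 2) ℤ_[p]).map ((↑) : ℤ_[p] → ℚ_[p]) *
            !![1, x; 0, 1] *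
            !![((y₁ : ℤ_[p]) : ℚ_[p]) * (p : ℚ_[p]) ^ (-(cP p n τ : ℤ)), 0;
               0, ((y₂ : ℤ_[p]) : ℚ_[p]) * (p : ℚ_[p]) ^ ((cP p n τ : ℤ) - n)] ∧
        cP p n σ = n - cP p n τ := by
  have hprime : p.Prime := Fact.out
  set c₀ := cP p n τ with hc₀def
  set a := (τ : Matrix (Fin 2) (Fin 2) ℤ_[p]) 0 0 with ha
  set b := (τ : Matrix (Fin 2) (Fin 2) ℤ_[p]) 0 1 with hb
  set c := (τ : Matrix (Fin 2) (Fin 2) ℤ_[p]) 1 0 with hc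
  set d := (τ : Matrix (Fin 2) (Fin 2) ℤ_[p]) 1 1 with hd
  have hc₀n : c₀ < n := by
    have : 0 < n - 2 * c₀ := hw
    omega
  -- c₀ facts
  have hbdd : BddAbove {k | k ≤ n ∧ (p:ℤ_[p])^k ∣ c} := ⟨n, fun k hk => hk.1⟩
  have hmem : c₀ ∈ {k | k ≤ n ∧ (p:ℤ_[p])^k ∣ c} := by
    rw [hc₀def]
    exact Nat.sSup_mem ⟨0, by simp⟩ hbdd
  have hdvd : (p:ℤ_[p])^c₀ ∣ c := hmem.2
  have hnd : ¬ (p:ℤ_[p])^(c₀+1) ∣ c := by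
    intro h
    have : c₀ + 1 ≤ c₀ := le_csSup hbdd ⟨by omega, h⟩
    omega
  obtain ⟨u₀, hu₀⟩ := hdvd
  have hu₀unit : IsUnit u₀ := by
    rw [isUnit_iff_not_dvd]
    intro h
    exact hnd (by rw [hu₀, pow_succ]; exact mul_dvd_mul_left _ h)
  obtain ⟨u, hu⟩ := hu₀unit
  have hdetτ : IsUnit ((τ : Matrix (Fin 2) (Fin 2) ℤ_[p]).det) :=
    (Matrix.isUnit_iff_isUnit_det _).mp ⟨τ, rfl⟩
  have hdetτ2 : (τ : Matrix (Fin 2) (Fin 2) ℤ_[p]).det = a * d - b * c :=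
    Matrix.det_fin_two _
  set e : ℤ_[p] := -(a * d - b * c) * ↑u⁻¹ with he_def
  have he : e * u₀ = -(a * d - b * c) := by
    rw [he_def, ← hu, mul_assoc, Units.inv_mul, mul_one]
  -- ℚ_p facts
  have hPne : (p:ℚ_[p]) ≠ 0 := Nat.cast_ne_zero.mpr hprime.ne_zero
  have hu₀ne : (↑u₀ : ℚ_[p]) ≠ 0 := by
    have : u₀ ≠ 0 := (hu ▸ u.isUnit).ne_zero
    exact_mod_cast fun h => this (Subtype.ext h)
  have hCeq : ((c : ℤ_[p]) : ℚ_[p]) = (p:ℚ_[p])^c₀ * (u₀ : ℚ_[p]) := by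
    rw [hu₀]; push_cast; ring
  have hCne : ((c : ℤ_[p]) : ℚ_[p]) ≠ 0 := by
    rw [hCeq]
    exact mul_ne_zero (pow_ne_zero _ hPne) hu₀ne
  refine ⟨-((d : ℚ_[p]) / (c : ℚ_[p])), fun y₁ y₂ γ hγ => ?_⟩
  set g10 := (γ : Matrix (Fin 2) (Fin 2) ℤ_[p]) 1 0 with hg10
  set g11 := (γ : Matrix (Fin 2) (Fin 2) ℤ_[p]) 1 1 with hg11
  set σ' : Matrix (Fin 2) (Fin 2) ℤ_[p] :=
    !![-(↑u₀ * ↑y₁), 0; (p:ℤ_[p])^(n-c₀) * a * ↑y₁, e * ↑y₂] with hσ'def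
  have hdetσ' : σ'.det = ↑y₁ * ↑y₂ * (a * d - b * c) := by
    rw [hσ'def, Matrix.det_fin_two_of, he_def, ← hu]
    have h1 : (↑u : ℤ_[p]) * ↑u⁻¹ = 1 := by
      rw [← Units.val_mul, mul_inv_cancel, Units.val_one]
    linear_combination (↑y₁ * ↑y₂ * (a * d - b * c)) * h1
  have hσ'unit : IsUnit σ' := by
    rw [Matrix.isUnit_iff_isUnit_det, hdetσ', ← hdetτ2]
    exact ((y₁.isUnit.mul y₂.isUnit)).mul hdetτ
  refine ⟨γ * hσ'unit.unit, ?_, ?_⟩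
  · -- map equality
    have hσval : ((γ * hσ'unit.unit : GL (Fin 2) ℤ_[p]) : Matrix (Fin 2) (Fin 2) ℤ_[p])
        = (γ : Matrix (Fin 2) (Fin 2) ℤ_[p]) * σ' := by
      rw [Units.val_mul, hσ'unit.unit_spec]
    rw [hσval]
    have hmapmul : ((γ : Matrix (Fin 2) (Fin 2) ℤ_[p]) * σ').map ((↑) : ℤ_[p] → ℚ_[p])
        = (γ : Matrix (Fin 2) (Fin 2) ℤ_[p]).map ((↑) : ℤ_[p] → ℚ_[p]) *
          σ'.map ((↑) : ℤ_[p] → ℚ_[p]) :=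
      Matrix.map_mul (f := PadicInt.Coe.ringHom)
    rw [hmapmul]
    have hcore : σ'.map ((↑) : ℤ_[p] → ℚ_[p]) =
        !![0, -1; (p : ℚ_[p]) ^ n, 0] *
        (τ : Matrix (Fin 2) (Fin 2) ℤ_[p]).map ((↑) : ℤ_[p] → ℚ_[p]) *
        !![1, -((d : ℚ_[p]) / (c : ℚ_[p])); 0, 1] *
        !![((y₁ : ℤ_[p]) : ℚ_[p]) * (p : ℚ_[p]) ^ (-(c₀ : ℤ)), 0;
           0, ((y₂ : ℤ_[p]) : ℚ_[p]) * (p : ℚ_[p]) ^ ((c₀ : ℤ) - n)] := by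
      have hz1 : (p:ℚ_[p]) ^ (-(c₀:ℤ)) = ((p:ℚ_[p])^c₀)⁻¹ := by
        rw [_root_.zpow_neg, zpow_natCast]
      have hz2 : (p:ℚ_[p]) ^ ((c₀:ℤ) - n) = (p:ℚ_[p])^c₀ / (p:ℚ_[p])^n := by
        rw [zpow_sub₀ hPne, zpow_natCast, zpow_natCast]
      have hz3 : (p:ℚ_[p])^(n-c₀) * (p:ℚ_[p])^c₀ = (p:ℚ_[p])^n := by
        rw [← pow_add, Nat.sub_add_cancel hc₀n.le]
      have heQ : (e : ℚ_[p]) * (u₀ : ℚ_[p]) = -((a:ℚ_[p]) * d - (b:ℚ_[p]) * c) := by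
        exact_mod_cast congrArg (PadicInt.Coe.ringHom) he
      have hmapij : ∀ (M : Matrix (Fin 2) (Fin 2) ℤ_[p]) (i j : Fin 2),
          M.map ((↑) : ℤ_[p] → ℚ_[p]) i j = ((M i j : ℤ_[p]) : ℚ_[p]) := fun _ _ _ => rfl
      ext i j
      fin_cases i <;> fin_cases j <;>
        simp only [hσ'def, hmapij, Matrix.mul_apply, Fin.sum_univ_two, Matrix.map_apply,
          Matrix.cons_val_zero, Matrix.cons_val_one, Matrix.head_cons, Matrix.head_fin_const,
          Matrix.cons_val', Matrix.empty_val', Matrix.cons_val_fin_one, Fin.isValue, Matrix.of_apply,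
          ← ha, ← hb, ← hc, ← hd, hz1, hz2] <;>
        simp [Matrix.vecHead, Matrix.vecTail] <;> push_cast
      · rw [hCeq]; field_simp
      · exact Or.inl (by field_simp; ring)
      · field_simp
        linear_combination (a:ℚ_[p]) * hz3
      · have key : (e:ℚ_[p]) * (c:ℚ_[p]) = (p:ℚ_[p])^c₀ * (-((a:ℚ_[p]) * d - (b:ℚ_[p]) * c)) := by
          linear_combination ((e : ℤ_[p]) : ℚ_[p]) * hCeq + ((p:ℚ_[p])^c₀) * heQ
        field_simp
        linear_combination key
    rw [hcore]
    simp only [mul_assoc]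
  · -- cP computation
    have hσ10 : ((γ * hσ'unit.unit : GL (Fin 2) ℤ_[p]) : Matrix (Fin 2) (Fin 2) ℤ_[p]) 1 0
        = g10 * (-(↑u₀ * ↑y₁)) + g11 * ((p:ℤ_[p])^(n-c₀) * a * ↑y₁) := by
      rw [Units.val_mul, hσ'unit.unit_spec]
      simp [Matrix.mul_apply, Fin.sum_univ_two, hσ'def, ← hg10, ← hg11]
    rw [hc₀def] at hσ10 ⊢
    show sSup {k | k ≤ n ∧ (p : ℤ_[p]) ^ k ∣ _} = _
    rw [hσ10]
    apply sSup_eq_of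
    · omega
    · apply dvd_add
      · exact ((pow_dvd_pow _ (by omega : n - c₀ ≤ n)).trans hγ).mul_right _
      · exact (((dvd_mul_right _ _).mul_right _).mul_left _)
    · by_cases hc0 : c₀ = 0
      · left; omega
      · right
        intro h
        have h1 : (p:ℤ_[p])^(n-c₀+1) ∣ g10 * (-(↑u₀ * ↑y₁)) :=
          ((pow_dvd_pow _ (by omega : n - c₀ + 1 ≤ n)).trans hγ).mul_right _
        have h2 : (p:ℤ_[p])^(n-c₀+1) ∣ g11 * ((p:ℤ_[p])^(n-c₀) * a * ↑y₁) := by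
          have := dvd_sub h h1
          simpa using this
        have h3 : (p:ℤ_[p])^(n-c₀) * (p:ℤ_[p]) ∣ (p:ℤ_[p])^(n-c₀) * (g11 * a * ↑y₁) := by
          rw [← pow_succ]
          convert h2 using 1
          ring
        have h4 : (p:ℤ_[p]) ∣ g11 * a * ↑y₁ :=
          (mul_dvd_mul_iff_left (pow_ne_zero _ (by
            exact_mod_cast Nat.cast_ne_zero.mpr hprime.ne_zero))).mp h3
        -- units
        have hAunit : IsUnit a := by
          rw [isUnit_iff_not_dvd]
          intro hpa
          have hpc : (p:ℤ_[p]) ∣ c := by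
            rw [hu₀]
            exact ((dvd_pow_self _ hc0).mul_right _)
          have : (p:ℤ_[p]) ∣ (τ : Matrix (Fin 2) (Fin 2) ℤ_[p]).det := by
            rw [hdetτ2]
            exact dvd_sub (hpa.mul_right _) (hpc.mul_left _)
          exact ((isUnit_iff_not_dvd _).mp hdetτ) this
        have hGunit : IsUnit g11 := by
          rw [isUnit_iff_not_dvd]
          intro hpg
          have hpg10 : (p:ℤ_[p]) ∣ g10 := (dvd_pow_self _ (by omega : n ≠ 0)).trans hγ
          have hdetγ : IsUnit ((γ : Matrix (Fin 2) (Fin 2) ℤ_[p]).det) :=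
            (Matrix.isUnit_iff_isUnit_det _).mp ⟨γ, rfl⟩
          have : (p:ℤ_[p]) ∣ (γ : Matrix (Fin 2) (Fin 2) ℤ_[p]).det := by
            rw [Matrix.det_fin_two]
            exact dvd_sub (hpg.mul_left _) (hpg10.mul_left _)
          exact ((isUnit_iff_not_dvd _).mp hdetγ) this
        exact ((isUnit_iff_not_dvd _).mp ((hGunit.mul hAunit).mul y₁.isUnit)) h4
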